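/- arXiv:cs/0412063 — 7 statements merged into one kernel-verified Lean document; each statement's English description precedes it below -/
import Mathlib

section
/- Let M = (Σ, Rᵃ, Rᶜ) be a mixed transition system satisfying the mix condition (MC). Then for every state s ∈ Σ, the pointed mixed transition system (M, s) and the pointed modal transition system ((Σ, Rᵃ ∩ Rᶜ, Rᶜ), s) are refinement-equivalent. -/
/-- A mixed transition system over event set `Act` with state set `σ`:
two transition relations `Ra` (asserted/must) and `Rc` (consistent/may). -/
structure MTS (Act σ : Type) where
  Ra : σ → Act → σ → Prop
  Rc : σ → Act → σ → Prop

namespace MTS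

/-- `M` is a modal transition system iff `Ra ⊆ Rc`. -/
def IsModal {Act σ : Type} (M : MTS Act σ) : Prop :=
  ∀ s α t, M.Ra s α t → M.Rc s α t

/-- `M` is image-finite. -/
def ImageFinite {Act σ : Type} (M : MTS Act σ) : Prop :=
  ∀ (s : σ) (α : Act), {t | M.Ra s α t}.Finite ∧ {t | M.Rc s α t}.Finite

end MTS

/-- A labelled transition system viewed as a mixed transition system `(Σ, R, R)`. -/
def LTS {Act σ : Type} (R : σ → Act → σ → Prop) : MTS Act σ := ⟨R, R⟩

/-- `Q` is a refinement from `M` to `N`. -/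
def IsRefinement {Act σ τ : Type} (M : MTS Act σ) (N : MTS Act τ) (Q : σ → τ → Prop) : Prop :=
  ∀ s t, Q s t → ∀ α : Act,
    (∀ s', M.Ra s α s' → ∃ t', N.Ra t α t' ∧ Q s' t') ∧
    (∀ t', N.Rc t α t' → ∃ s', M.Rc s α s' ∧ Q s' t')

/-- `(M,i) ⪯ (N,j)`: the pointed system `(N,j)` refines `(M,i)`. -/
def Refines {Act σ τ : Type} (M : MTS Act σ) (i : σ) (N : MTS Act τ) (j : τ) : Prop :=
  ∃ Q, IsRefinement M N Q ∧ Q i j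

/-- Modes for the two judgments of the semantics: `a` (asserted), `c` (consistent). -/
inductive RMode where
  | a | c

/-- The dual mode: `¬a = c` and `¬c = a`. -/
def RMode.negm : RMode → RMode
  | .a => .c
  | .c => .a

/-- The transition relation of mode `m`. -/
def MTS.R {Act σ : Type} (M : MTS Act σ) : RMode → σ → Act → σ → Prop
  | .a => M.Ra
  | .c => M.Rc

/-- Formulas of Hennessy–Milner logic over `Act`. -/
inductive HML (Act : Type) where
  | tt
  | neg (φ : HML Act)
  | dia (α : Act) (φ : HML Act)
  | and (φ ψ : HML Act)

/-- Larsen's semantics of Hennessy–Milner logic with two judgments `⊨ᵃ`, `⊨ᶜ`. -/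
def Sat {Act σ : Type} (M : MTS Act σ) : HML Act → RMode → σ → Prop
  | .tt, _, _ => True
  | .neg φ, m, s => ¬ Sat M φ m.negm s
  | .dia α φ, m, s => ∃ s', M.R m s α s' ∧ Sat M φ m s'
  | .and φ ψ, m, s => Sat M φ m s ∧ Sat M ψ m s

namespace HML

/-- `[α]φ = ¬⟨α⟩¬φ`. -/
def box {Act : Type} (α : Act) (φ : HML Act) : HML Act := .neg (.dia α (.neg φ))

/-- `φ ∨ ψ = ¬(¬φ ∧ ¬ψ)`. -/
def orf {Act : Type} (φ ψ : HML Act) : HML Act := .neg (.and (.neg φ) (.neg ψ))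

/-- Finite conjunction (empty conjunction is `tt`). -/
def bigAnd {Act : Type} : List (HML Act) → HML Act
  | [] => .tt
  | φ :: l => .and φ (bigAnd l)

/-- Finite disjunction (empty disjunction is `¬tt`). -/
def bigOr {Act : Type} : List (HML Act) → HML Act
  | [] => .neg .tt
  | φ :: l => orf φ (bigOr l)

/-- Modal depth of an HML formula. -/
def depth {Act : Type} : HML Act → ℕ
  | .tt => 0
  | .neg φ => φ.depth
  | .dia _ φ => 1 + φ.depth
  | .and φ ψ => max φ.depth ψ.depth

end HML

/-- Terms of the process algebra MPA. -/
inductive MPA (Act : Type) where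
  | zero
  | bot
  | prefMust (α : Act) (p : MPA Act)
  | prefMay (α : Act) (p : MPA Act)
  | plus (p q : MPA Act)

namespace MPA

variable {Act : Type} [DecidableEq Act]

/-- Must-successors of an MPA term for event `β` (structural operational semantics). -/
def must : MPA Act → Act → List (MPA Act)
  | .zero, _ => []
  | .bot, _ => []
  | .prefMust α p, β => if β = α then [p] else []
  | .prefMay _ _, _ => []
  | .plus p q, β => p.must β ++ q.must β

/-- All (must or may) successors of an MPA term for event `β`. -/
def may : MPA Act → Act → List (MPA Act)
  | .zero, _ => []
  | .bot, _ => [.bot]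
  | .prefMust α p, β => if β = α then [p] else []
  | .prefMay α p, β => if β = α then [p] else []
  | .plus p q, β => p.may β ++ q.may β

/-- The modal transition system `⟦·⟧` given by the structural operational semantics of MPA:
`Ra` is the set of must-transitions, `Rc` the set of all transitions. -/
def mts : MTS Act (MPA Act) :=
  ⟨fun p α q => q ∈ p.must α, fun p α q => q ∈ p.may α⟩

theorem sizeOf_lt_of_mem_must :
    ∀ (t : MPA Act) (α : Act) (r : MPA Act), r ∈ t.must α → sizeOf r < sizeOf t := by
  intro t
  induction t with
  | zero => intro α r h; simp [must] at h
  | bot => intro α r h; simp [must] at h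
  | prefMust β p ih =>
      intro α r h
      simp only [must] at h
      split at h <;> simp_all
  | prefMay β p ih => intro α r h; simp [must] at h
  | plus p q ihp ihq =>
      intro α r h
      simp only [must, List.mem_append] at h
      rcases h with h | h
      · have := ihp α r h; simp; omega
      · have := ihq α r h; simp; omega

theorem sizeOf_le_of_mem_may :
    ∀ (t : MPA Act) (α : Act) (r : MPA Act), r ∈ t.may α → sizeOf r ≤ sizeOf t := by
  intro t
  induction t with
  | zero => intro α r h; simp [may] at h
  | bot => intro α r h; simp [may] at h; simp [h]
  | prefMust β p ih =>
      intro α r h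
      simp only [may] at h
      split at h <;> simp_all
  | prefMay β p ih =>
      intro α r h
      simp only [may] at h
      split at h <;> simp_all
  | plus p q ihp ihq =>
      intro α r h
      simp only [may, List.mem_append] at h
      rcases h with h | h
      · have := ihp α r h; simp; omega
      · have := ihq α r h; simp; omega

theorem sizeOf_lt_plus_of_mem_may (p q : MPA Act) (α : Act) (r : MPA Act)
    (h : r ∈ (MPA.plus p q).may α) : sizeOf r < sizeOf (MPA.plus p q) := by
  simp only [may, List.mem_append] at h
  rcases h with h | h
  · have := sizeOf_le_of_mem_may p α r h; simp; omega
  · have := sizeOf_le_of_mem_may q α r h; simp; omega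

end MPA

/-- The characteristic Hennessy–Milner formula `φ_p` of an MPA term `p`. -/
noncomputable def charForm {Act : Type} [Fintype Act] [DecidableEq Act] : MPA Act → HML Act
  | .zero =>
      .bigAnd (((Finset.univ : Finset Act).toList).map fun α => .neg (.dia α .tt))
  | .bot => .tt
  | .prefMust α p =>
      .and (.dia α (charForm p)) (.and (HML.box α (charForm p))
        (.bigAnd ((((Finset.univ : Finset Act).toList).filter (fun β => β ≠ α)).map
          fun β => .neg (.dia β .tt))))
  | .prefMay α p =>
      .and (HML.box α (charForm p))
        (.bigAnd ((((Finset.univ : Finset Act).toList).filter (fun β => β ≠ α)).map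
          fun β => .neg (.dia β .tt)))
  | .plus p q =>
      .and
        (.bigAnd (((Finset.univ : Finset Act).toList).flatMap fun α =>
          ((MPA.plus p q).must α).attach.map fun r => HML.dia α (charForm r.1)))
        (.bigAnd (((Finset.univ : Finset Act).toList).map fun α =>
          HML.box α (.bigOr (((MPA.plus p q).may α).attach.map fun r => charForm r.1))))
decreasing_by
  all_goals first
    | exact MPA.sizeOf_lt_of_mem_must _ _ _ r.2
    | exact MPA.sizeOf_lt_plus_of_mem_may _ _ _ _ r.2
    | (simp; omega)
    | simp

/-- The formula `ψ_{w,α,p} = [δ₁]…[δₙ](⟨α⟩φ_p ∨ ¬⟨α⟩φ_p)`; the set `Φ` consists of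
all such formulas. -/
noncomputable def psiForm {Act : Type} [Fintype Act] [DecidableEq Act]
    (w : List Act) (α : Act) (p : MPA Act) : HML Act :=
  w.foldr (fun δ φ => HML.box δ φ)
    (HML.orf (.dia α (charForm p)) (.neg (.dia α (charForm p))))

/-- `Rᶜ`-reachability in a mixed transition system. -/
def MTS.ReachC {Act σ : Type} (M : MTS Act σ) : σ → σ → Prop :=
  Relation.ReflTransGen (fun s t => ∃ α, M.Rc s α t)
/-- `M` satisfies the mix condition (MC). -/
def MixCondition {Act σ : Type} (M : MTS Act σ) : Prop :=
  ∀ s (α : Act) s', M.Ra s α s' →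
    ∃ s'', (M.Ra s α s'' ∧ M.Rc s α s'') ∧ Refines M s' M s''

/-! The refinement preorder of `M` is itself a refinement from `M` to `(Σ, Rᵃ ∩ Rᶜ, Rᶜ)`:
an `Rᵃ`-step matched in `M` is replaced, by the mix condition, with an `Rᵃ ∩ Rᶜ`-step to a
state above it, and refinement is transitive. Conversely the identity is a refinement from
`(Σ, Rᵃ ∩ Rᶜ, Rᶜ)` to `M`, as it has fewer `Rᵃ`-steps and the same `Rᶜ`-steps. -/

def MTS.toModal {Act σ : Type} (M : MTS Act σ) : MTS Act σ :=
  ⟨fun a α b => M.Ra a α b ∧ M.Rc a α b, M.Rc⟩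

namespace IsRefinement

variable {Act σ τ υ : Type}

theorem eq_of_le {M N : MTS Act σ} (hRa : ∀ s α t, M.Ra s α t → N.Ra s α t)
    (hRc : ∀ s α t, N.Rc s α t → M.Rc s α t) : IsRefinement M N Eq := by
  rintro s _ rfl α
  exact ⟨fun s' h => ⟨s', hRa s α s' h, rfl⟩, fun t' h => ⟨t', hRc s α t' h, rfl⟩⟩

theorem comp {M : MTS Act σ} {N : MTS Act τ} {K : MTS Act υ} {Q : σ → τ → Prop}
    {P : τ → υ → Prop} (hQ : IsRefinement M N Q) (hP : IsRefinement N K P) :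
    IsRefinement M K (Relation.Comp Q P) := by
  rintro s u ⟨t, hst, htu⟩ α
  constructor
  · intro s' hs'
    obtain ⟨t', ht', hst'⟩ := (hQ s t hst α).1 s' hs'
    obtain ⟨u', hu', htu'⟩ := (hP t u htu α).1 t' ht'
    exact ⟨u', hu', t', hst', htu'⟩
  · intro u' hu'
    obtain ⟨t', ht', htu'⟩ := (hP t u htu α).2 u' hu'
    obtain ⟨s', hs', hst'⟩ := (hQ s t hst α).2 t' ht'
    exact ⟨s', hs', t', hst', htu'⟩

end IsRefinement

namespace Refines

variable {Act σ τ υ : Type}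

theorem refl (M : MTS Act σ) (s : σ) : Refines M s M s :=
  ⟨Eq, IsRefinement.eq_of_le (fun _ _ _ h => h) (fun _ _ _ h => h), rfl⟩

theorem trans {M : MTS Act σ} {N : MTS Act τ} {K : MTS Act υ} {s : σ} {t : τ} {u : υ}
    (hst : Refines M s N t) (htu : Refines N t K u) : Refines M s K u :=
  let ⟨_, hQ, hQst⟩ := hst
  let ⟨_, hP, hPtu⟩ := htu
  ⟨_, hQ.comp hP, t, hQst, hPtu⟩

theorem isRefinement (M : MTS Act σ) (N : MTS Act τ) :
    IsRefinement M N (fun s t => Refines M s N t) := by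
  rintro s t ⟨Q, hQ, hst⟩ α
  constructor
  · intro s' hs'
    obtain ⟨t', ht', hst'⟩ := (hQ s t hst α).1 s' hs'
    exact ⟨t', ht', Q, hQ, hst'⟩
  · intro t' ht'
    obtain ⟨s', hs', hst'⟩ := (hQ s t hst α).2 t' ht'
    exact ⟨s', hs', Q, hQ, hst'⟩

end Refines

theorem MixCondition.isRefinement_toModal {Act σ : Type} {M : MTS Act σ}
    (hMC : MixCondition M) : IsRefinement M M.toModal (fun s t => Refines M s M t) := by
  intro s t hst α
  refine ⟨fun s' hs' => ?_, (Refines.isRefinement M M s t hst α).2⟩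
  obtain ⟨t', ht', hst'⟩ := (Refines.isRefinement M M s t hst α).1 s' hs'
  obtain ⟨t'', ht'', ht't''⟩ := hMC t α t' ht'
  exact ⟨t'', ht'', hst'.trans ht't''⟩

theorem mixCondition_refinement_equivalent_general {Act σ : Type}
    (M : MTS Act σ) (hMC : MixCondition M) (s : σ) :
    Refines M s ⟨fun a α b => M.Ra a α b ∧ M.Rc a α b, M.Rc⟩ s ∧
    Refines ⟨fun a α b => M.Ra a α b ∧ M.Rc a α b, M.Rc⟩ s M s :=
  ⟨⟨_, hMC.isRefinement_toModal, Refines.refl M s⟩,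
    ⟨Eq, IsRefinement.eq_of_le (fun _ _ _ h => h.1) (fun _ _ _ h => h), rfl⟩⟩

/-- If `M = (Σ, Rᵃ, Rᶜ)` satisfies the mix condition, then for every
state `s`, the pointed systems `(M, s)` and `((Σ, Rᵃ ∩ Rᶜ, Rᶜ), s)` are
refinement-equivalent. -/
theorem mixCondition_refinement_equivalent {Act σ : Type} [Fintype Act]
    (M : MTS Act σ) (hMC : MixCondition M) (s : σ) :
    Refines M s ⟨fun a α b => M.Ra a α b ∧ M.Rc a α b, M.Rc⟩ s ∧
    Refines ⟨fun a α b => M.Ra a α b ∧ M.Rc a α b, M.Rc⟩ s M s :=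
  mixCondition_refinement_equivalent_general M hMC s
end

section
/- For every pointed modal transition system (M,i) and every formula φ of Hennessy–Milner logic, if (M,i) ⊨ᵃ φ then (M,i) ⊨ᶜ φ. -/
theorem sat_a_implies_sat_c_general {Act σ : Type}
    (M : MTS Act σ) (hM : M.IsModal) (i : σ) (φ : HML Act)
    (h : Sat M φ .a i) : Sat M φ .c i := by
  induction φ generalizing i with
  | tt => trivial
  | neg φ ih => exact fun hc => h (ih i hc)
  | dia α φ ih =>
      obtain ⟨s, hRa, hs⟩ := h
      exact ⟨s, hM i α s hRa, ih s hs⟩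
  | and φ ψ ihφ ihψ => exact ⟨ihφ i h.1, ihψ i h.2⟩

/-- For every pointed modal transition system `(M,i)` and HML formula
`φ`, `(M,i) ⊨ᵃ φ` implies `(M,i) ⊨ᶜ φ`. -/
theorem sat_a_implies_sat_c {Act σ : Type} [Fintype Act]
    (M : MTS Act σ) (hM : M.IsModal) (i : σ) (φ : HML Act)
    (h : Sat M φ .a i) : Sat M φ .c i :=
  sat_a_implies_sat_c_general M hM i φ h
end

section
/- Let (M,i) and (N,j) be pointed modal transition systems with (M,i) ⪯ (N,j). Then for every formula φ of Hennessy–Milner logic: (M,i) ⊨ᵃ φ implies (N,j) ⊨ᵃ φ, and (N,j) ⊨ᶜ φ implies (M,i) ⊨ᶜ φ. -/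
namespace IsRefinement

variable {Act σ τ : Type} {M : MTS Act σ} {N : MTS Act τ} {Q : σ → τ → Prop}

/-- The two judgments must be proved together: negation swaps the mode and hence the
direction of transfer along `Q`. -/
theorem sat_transfer (hQ : IsRefinement M N Q) (φ : HML Act) :
    ∀ {s t}, Q s t → (Sat M φ .a s → Sat N φ .a t) ∧ (Sat N φ .c t → Sat M φ .c s) := by
  induction φ with
  | tt => exact fun _ => ⟨id, id⟩
  | neg ψ ih =>
    intro s t hst
    exact ⟨fun hs ht => hs ((ih hst).2 ht), fun ht hs => ht ((ih hst).1 hs)⟩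
  | dia α ψ ih =>
    intro s t hst
    constructor
    · rintro ⟨s', hss', hs'⟩
      obtain ⟨t', htt', hst'⟩ := (hQ s t hst α).1 s' hss'
      exact ⟨t', htt', (ih hst').1 hs'⟩
    · rintro ⟨t', htt', ht'⟩
      obtain ⟨s', hss', hst'⟩ := (hQ s t hst α).2 t' htt'
      exact ⟨s', hss', (ih hst').2 ht'⟩
  | and ψ χ ihψ ihχ =>
    intro s t hst
    exact ⟨fun ⟨hψ, hχ⟩ => ⟨(ihψ hst).1 hψ, (ihχ hst).1 hχ⟩,
      fun ⟨hψ, hχ⟩ => ⟨(ihψ hst).2 hψ, (ihχ hst).2 hχ⟩⟩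

end IsRefinement

theorem refines_preserves_HML_general {Act σ τ : Type}
    (M : MTS Act σ) (N : MTS Act τ)
    (i : σ) (j : τ) (h : Refines M i N j) (φ : HML Act) :
    (Sat M φ .a i → Sat N φ .a j) ∧ (Sat N φ .c j → Sat M φ .c i) := by
  obtain ⟨Q, hQ, hij⟩ := h
  exact hQ.sat_transfer φ hij

/-- If `(M,i) ⪯ (N,j)` for pointed modal transition systems, then
`(M,i) ⊨ᵃ φ` implies `(N,j) ⊨ᵃ φ`, and `(N,j) ⊨ᶜ φ` implies `(M,i) ⊨ᶜ φ`. -/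
theorem refines_preserves_HML {Act σ τ : Type} [Fintype Act]
    (M : MTS Act σ) (N : MTS Act τ) (hM : M.IsModal) (hN : N.IsModal)
    (i : σ) (j : τ) (h : Refines M i N j) (φ : HML Act) :
    (Sat M φ .a i → Sat N φ .a j) ∧ (Sat N φ .c j → Sat M φ .c i) :=
  refines_preserves_HML_general M N i j h φ
end

section
/- Let (M,i) and (N,j) be image-finite pointed modal transition systems over a finite event set Act. Then the following are equivalent: (a) (M,i) ⪯ (N,j); (b) for every Hennessy–Milner logic formula φ, (M,i) ⊨ᵃ φ implies (N,j) ⊨ᵃ φ; (c) for every Hennessy–Milner logic formula φ, (N,j) ⊨ᶜ φ implies (M,i) ⊨ᶜ φ. -/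
/-! Refinement preserves `⊨ᵃ` forwards and `⊨ᶜ` backwards, by induction on formulas.
Conversely, for image-finite systems `⊨ᵃ`-inclusion is itself a refinement, by the
Hennessy–Milner argument with finite conjunctions. Since `¬` swaps the two modes,
`⊨ᵃ`-inclusion from `s` to `t` is the same as `⊨ᶜ`-inclusion from `t` to `s`. -/

theorem IsRefinement.sat_a_and_sat_c {Act σ τ : Type} {M : MTS Act σ} {N : MTS Act τ}
    {Q : σ → τ → Prop} (hQ : IsRefinement M N Q) (φ : HML Act) {s : σ} {t : τ} (hst : Q s t) :
    (Sat M φ .a s → Sat N φ .a t) ∧ (Sat N φ .c t → Sat M φ .c s) := by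
  induction φ generalizing s t with
  | tt => exact ⟨fun _ => trivial, fun _ => trivial⟩
  | neg φ ih =>
    obtain ⟨ha, hc⟩ := ih hst
    exact ⟨fun hs ht => hs (hc ht), fun ht hs => ht (ha hs)⟩
  | dia α φ ih =>
    constructor
    · rintro ⟨s', hss', hs'⟩
      obtain ⟨t', htt', hst'⟩ := (hQ s t hst α).1 s' hss'
      exact ⟨t', htt', (ih hst').1 hs'⟩
    · rintro ⟨t', htt', ht'⟩
      obtain ⟨s', hss', hst'⟩ := (hQ s t hst α).2 t' htt'
      exact ⟨s', hss', (ih hst').2 ht'⟩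
  | and φ ψ ihφ ihψ =>
    obtain ⟨hφa, hφc⟩ := ihφ hst
    obtain ⟨hψa, hψc⟩ := ihψ hst
    exact ⟨fun h => ⟨hφa h.1, hψa h.2⟩, fun h => ⟨hφc h.1, hψc h.2⟩⟩

theorem forall_sat_a_imp_iff_forall_sat_c_imp {Act σ τ : Type} (M : MTS Act σ) (N : MTS Act τ)
    (s : σ) (t : τ) :
    (∀ φ : HML Act, Sat M φ .a s → Sat N φ .a t) ↔
      (∀ φ : HML Act, Sat N φ .c t → Sat M φ .c s) :=
  ⟨fun h φ ht => not_not.mp fun hs => h (.neg φ) hs ht,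
    fun h φ hs => not_not.mp fun ht => h (.neg φ) ht hs⟩

theorem exists_sat_forall_not_sat_of_finite {Act σ τ : Type} (M : MTS Act σ) (N : MTS Act τ)
    (m : RMode) (s : σ) {T : Set τ} (hT : T.Finite)
    (h : ∀ t ∈ T, ∃ φ : HML Act, Sat M φ m s ∧ ¬ Sat N φ m t) :
    ∃ φ : HML Act, Sat M φ m s ∧ ∀ t ∈ T, ¬ Sat N φ m t := by
  induction T, hT using Set.Finite.induction_on with
  | empty => exact ⟨.tt, trivial, fun _ ht => ht.elim⟩
  | @insert t T _ _ ih =>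
    obtain ⟨φ, hsφ, htφ⟩ := h t (Set.mem_insert t T)
    obtain ⟨ψ, hsψ, hTψ⟩ := ih fun t' ht' => h t' (Set.mem_insert_of_mem t ht')
    refine ⟨.and φ ψ, ⟨hsφ, hsψ⟩, ?_⟩
    rintro t' (rfl | ht') ⟨ht'φ, ht'ψ⟩
    exacts [htφ ht'φ, hTψ t' ht' ht'ψ]

/-- If no `α`-successor of `t` matched `s'`, then `⟨α⟩` of a conjunction separating `s'`
from each of the finitely many of them would hold at `s` but not at `t`. -/
theorem exists_succ_forall_sat_imp {Act σ τ : Type} (M : MTS Act σ) (N : MTS Act τ)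
    (m : RMode) {s : σ} {t : τ} {α : Act} (hfin : {t' | N.R m t α t'}.Finite)
    (hst : ∀ φ : HML Act, Sat M φ m s → Sat N φ m t) {s' : σ} (hss' : M.R m s α s') :
    ∃ t', N.R m t α t' ∧ ∀ φ : HML Act, Sat M φ m s' → Sat N φ m t' := by
  by_contra! hno
  obtain ⟨φ, hs'φ, hnot⟩ := exists_sat_forall_not_sat_of_finite M N m s' hfin hno
  obtain ⟨t', htt', ht'φ⟩ := hst (.dia α φ) ⟨s', hss', hs'φ⟩
  exact hnot t' htt' ht'φ

theorem isRefinement_forall_sat_a_imp {Act σ τ : Type} (M : MTS Act σ) (N : MTS Act τ)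
    (hMf : M.ImageFinite) (hNf : N.ImageFinite) :
    IsRefinement M N fun s t => ∀ φ : HML Act, Sat M φ .a s → Sat N φ .a t := by
  intro s t hst α
  refine ⟨fun s' hss' => exists_succ_forall_sat_imp M N .a (hNf t α).1 hst hss', ?_⟩
  intro t' htt'
  rw [forall_sat_a_imp_iff_forall_sat_c_imp] at hst
  obtain ⟨s', hss', hs't'⟩ := exists_succ_forall_sat_imp N M .c (hMf s α).2 hst htt'
  exact ⟨s', hss', (forall_sat_a_imp_iff_forall_sat_c_imp M N s' t').mpr hs't'⟩

theorem refines_iff_HML_imageFinite_general {Act σ τ : Type}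
    (M : MTS Act σ) (N : MTS Act τ)
    (hMf : M.ImageFinite) (hNf : N.ImageFinite) (i : σ) (j : τ) :
    (Refines M i N j ↔ ∀ φ : HML Act, Sat M φ .a i → Sat N φ .a j) ∧
    (Refines M i N j ↔ ∀ φ : HML Act, Sat N φ .c j → Sat M φ .c i) := by
  have hrefines : Refines M i N j ↔ ∀ φ : HML Act, Sat M φ .a i → Sat N φ .a j :=
    ⟨fun ⟨_, hQ, hij⟩ φ => (hQ.sat_a_and_sat_c φ hij).1,
      fun h => ⟨_, isRefinement_forall_sat_a_imp M N hMf hNf, h⟩⟩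
  exact ⟨hrefines, hrefines.trans (forall_sat_a_imp_iff_forall_sat_c_imp M N i j)⟩

/-- For image-finite pointed modal transition systems `(M,i)`, `(N,j)`
over a finite event set, the following are equivalent: (a) `(M,i) ⪯ (N,j)`;
(b) every `⊨ᵃ`-satisfied HML formula of `(M,i)` is `⊨ᵃ`-satisfied by `(N,j)`;
(c) every `⊨ᶜ`-satisfied HML formula of `(N,j)` is `⊨ᶜ`-satisfied by `(M,i)`. -/
theorem refines_iff_HML_imageFinite {Act σ τ : Type} [Fintype Act]
    (M : MTS Act σ) (N : MTS Act τ) (hM : M.IsModal) (hN : N.IsModal)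
    (hMf : M.ImageFinite) (hNf : N.ImageFinite) (i : σ) (j : τ) :
    (Refines M i N j ↔ ∀ φ : HML Act, Sat M φ .a i → Sat N φ .a j) ∧
    (Refines M i N j ↔ ∀ φ : HML Act, Sat N φ .c j → Sat M φ .c i) :=
  refines_iff_HML_imageFinite_general M N hMf hNf i j
end

section
/- For every term p of the process algebra MPA and every pointed modal transition system (N,j): (⟦p⟧, p) ⪯ (N,j) if and only if (N,j) ⊨ᵃ φ_p, where φ_p is the characteristic Hennessy–Milner logic formula of p. -/
/-! The characteristic formula unfolds exactly one round of the refinement game: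
`(N,j) ⊨ᵃ φ_p` iff every must-move `p -α-> r` is answered by a must-move `j -α-> j'` with
`(N,j') ⊨ᵃ φ_r`, and every may-move `j -α-> j'` by a move `p -α-> r` with `(N,j') ⊨ᵃ φ_r`.
Hence satisfaction of characteristic formulas is itself a refinement, and every refinement is
contained in it, by induction on the size of `p`: each move shrinks the term except `⊥ -γ-> ⊥`,
whose target formula `φ_⊥ = tt` holds anyway. -/

@[simp]
theorem RMode.negm_negm (m : RMode) : m.negm.negm = m := by cases m <;> rfl

section Sat

variable {Act σ : Type} (M : MTS Act σ)

@[simp]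
theorem sat_tt (m : RMode) (s : σ) : Sat M .tt m s := trivial

@[simp]
theorem sat_neg (φ : HML Act) (m : RMode) (s : σ) :
    Sat M (.neg φ) m s ↔ ¬ Sat M φ m.negm s := Iff.rfl

@[simp]
theorem sat_dia (α : Act) (φ : HML Act) (m : RMode) (s : σ) :
    Sat M (.dia α φ) m s ↔ ∃ t, M.R m s α t ∧ Sat M φ m t := Iff.rfl

@[simp]
theorem sat_and (φ ψ : HML Act) (m : RMode) (s : σ) :
    Sat M (.and φ ψ) m s ↔ Sat M φ m s ∧ Sat M ψ m s := Iff.rfl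

@[simp]
theorem sat_box (α : Act) (φ : HML Act) (m : RMode) (s : σ) :
    Sat M (HML.box α φ) m s ↔ ∀ t, M.R m.negm s α t → Sat M φ m t := by
  simp [HML.box]

@[simp]
theorem sat_orf (φ ψ : HML Act) (m : RMode) (s : σ) :
    Sat M (HML.orf φ ψ) m s ↔ Sat M φ m s ∨ Sat M ψ m s := by
  simp only [HML.orf, sat_neg, sat_and, RMode.negm_negm]
  tauto

@[simp]
theorem sat_bigAnd (l : List (HML Act)) (m : RMode) (s : σ) :
    Sat M (HML.bigAnd l) m s ↔ ∀ φ ∈ l, Sat M φ m s := by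
  induction l with
  | nil => simp [HML.bigAnd]
  | cons φ l ih => simp [HML.bigAnd, ih]

@[simp]
theorem sat_bigOr (l : List (HML Act)) (m : RMode) (s : σ) :
    Sat M (HML.bigOr l) m s ↔ ∃ φ ∈ l, Sat M φ m s := by
  induction l with
  | nil => simp [HML.bigOr]
  | cons φ l ih => simp [HML.bigOr, ih]

end Sat

def RefinementStep {Act σ τ : Type} (M : MTS Act σ) (N : MTS Act τ) (Q : σ → τ → Prop)
    (s : σ) (t : τ) : Prop :=
  ∀ α, (∀ s', M.Ra s α s' → ∃ t', N.Ra t α t' ∧ Q s' t') ∧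
    (∀ t', N.Rc t α t' → ∃ s', M.Rc s α s' ∧ Q s' t')

theorem MPA.eq_bot_or_sizeOf_lt_of_mem_may {Act : Type} [DecidableEq Act] {p r : MPA Act}
    {α : Act} (h : r ∈ p.may α) : r = .bot ∨ sizeOf r < sizeOf p := by
  cases p with
  | plus u v => exact .inr (MPA.sizeOf_lt_plus_of_mem_may u v α r h)
  | _ => simp only [MPA.may] at h; grind

section CharForm

variable {Act τ : Type} [Fintype Act] [DecidableEq Act] {N : MTS Act τ}

theorem sat_charForm_iff_refinementStep {p : MPA Act} {j : τ} :
    Sat N (charForm p) .a j ↔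
      RefinementStep MPA.mts N (fun r t => Sat N (charForm r) .a t) p j := by
  cases p with
  | plus u v =>
    rw [charForm]
    simp only [sat_and, sat_bigAnd, List.forall_mem_flatMap, List.forall_mem_map]
    simp [RefinementStep, MPA.mts, MTS.R, RMode.negm, forall_and]
  | _ => simp [charForm, RefinementStep, MPA.mts, MPA.must, MPA.may, MTS.R, RMode.negm] <;> grind

theorem isRefinement_sat_charForm :
    IsRefinement MPA.mts N (fun p j => Sat N (charForm p) .a j) :=
  fun _ _ => sat_charForm_iff_refinementStep.1

theorem IsRefinement.sat_charForm {Q : MPA Act → τ → Prop} (hQ : IsRefinement MPA.mts N Q)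
    {p : MPA Act} {j : τ} (hpj : Q p j) : Sat N (charForm p) .a j := by
  rw [sat_charForm_iff_refinementStep]
  intro α
  obtain ⟨hmust, hmay⟩ := hQ p j hpj α
  refine ⟨fun r hr => ?_, fun j' hj' => ?_⟩
  · obtain ⟨j', hj', hrj'⟩ := hmust r hr
    have := MPA.sizeOf_lt_of_mem_must p α r hr
    exact ⟨j', hj', hQ.sat_charForm hrj'⟩
  · obtain ⟨r, hr, hrj'⟩ := hmay j' hj'
    refine ⟨r, hr, ?_⟩
    rcases MPA.eq_bot_or_sizeOf_lt_of_mem_may hr with rfl | hlt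
    · simp [charForm]
    · exact hQ.sat_charForm hrj'
termination_by sizeOf p

end CharForm

theorem refines_mpa_iff_sat_charForm_general {Act τ : Type} [Fintype Act] [DecidableEq Act]
    (p : MPA Act) (N : MTS Act τ) (j : τ) :
    Refines MPA.mts p N j ↔ Sat N (charForm p) .a j :=
  ⟨fun ⟨_, hQ, hpj⟩ => hQ.sat_charForm hpj, fun h => ⟨_, isRefinement_sat_charForm, h⟩⟩

/-- For every MPA term `p` and every pointed modal transition system
`(N,j)`: `(⟦p⟧, p) ⪯ (N,j)` iff `(N,j) ⊨ᵃ φ_p`. -/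
theorem refines_mpa_iff_sat_charForm {Act τ : Type} [Fintype Act] [DecidableEq Act]
    (p : MPA Act) (N : MTS Act τ) (hN : N.IsModal) (j : τ) :
    Refines MPA.mts p N j ↔ Sat N (charForm p) .a j :=
  refines_mpa_iff_sat_charForm_general p N j
end

section
/- Let (M,i) be a pointed modal transition system over a finite event set Act such that (M,i) ⊨ᵃ ψ for every formula ψ ∈ Φ, and let s be a state Rᶜ-reachable from i in M. Then (M,s) ⊨ᵃ ψ for every formula ψ ∈ Φ. -/
theorem sat_box_iff {Act σ : Type} {M : MTS Act σ} {δ : Act} {φ : HML Act} {m : RMode} {s : σ} :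
    Sat M (HML.box δ φ) m s ↔ ∀ t, M.R m.negm s δ t → Sat M φ m t := by
  cases m <;> simp [HML.box, Sat, RMode.negm]

theorem psiForm_cons {Act : Type} [Fintype Act] [DecidableEq Act]
    (δ : Act) (w : List Act) (α : Act) (p : MPA Act) :
    psiForm (δ :: w) α p = HML.box δ (psiForm w α p) :=
  rfl

-- `Φ` is closed under stripping a leading box, and in mode `a` a box ranges over `Rᶜ`-successors.
theorem psiForms_preserved_by_reachability_general {Act σ : Type} [Fintype Act] [DecidableEq Act]
    (M : MTS Act σ) (i : σ)
    (h : ∀ (w : List Act) (α : Act) (p : MPA Act), Sat M (psiForm w α p) .a i)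
    (s : σ) (hs : M.ReachC i s) :
    ∀ (w : List Act) (α : Act) (p : MPA Act), Sat M (psiForm w α p) .a s := by
  induction hs with
  | refl => exact h
  | tail _ hstep ih =>
    obtain ⟨δ, hδ⟩ := hstep
    intro w α p
    have hbox := ih (δ :: w) α p
    rw [psiForm_cons, sat_box_iff] at hbox
    exact hbox _ hδ

/-- If `(M,i)` satisfies (in mode `a`) every formula `ψ_{w,α,p} ∈ Φ`,
and `s` is `Rᶜ`-reachable from `i`, then `(M,s)` satisfies every formula of `Φ`. -/
theorem psiForms_preserved_by_reachability {Act σ : Type} [Fintype Act] [DecidableEq Act]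
    (M : MTS Act σ) (hM : M.IsModal) (i : σ)
    (h : ∀ (w : List Act) (α : Act) (p : MPA Act), Sat M (psiForm w α p) .a i)
    (s : σ) (hs : M.ReachC i s) :
    ∀ (w : List Act) (α : Act) (p : MPA Act), Sat M (psiForm w α p) .a s :=
  psiForms_preserved_by_reachability_general M i h s hs
end

section
/- Let Act be a finite event set and Γ a set of Hennessy–Milner logic formulas such that every finite subset Δ ⊆ Γ is satisfied by some pointed labelled transition system (i.e., there is a pointed labelled transition system (L,l) with (L,l) ⊨ᵃ δ for all δ ∈ Δ). Then there exists a pointed labelled transition system (L*,l*) with (L*,l*) ⊨ᵃ γ for every γ ∈ Γ. -/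
/-!
On a labelled transition system the judgments `⊨ᵃ` and `⊨ᶜ` coincide, so `¬` is classical
negation and `[α]` the usual box. Compactness then follows from a canonical model: finite
satisfiability is of finite character, so by Teichmüller–Tukey every finitely satisfiable set
extends to a maximal one; the maximal sets are the states, with an `α`-step from `M` to `N`
whenever `N` contains every `ψ` with `[α]ψ ∈ M`, and a formula holds at `M` iff it lies in `M`.
-/

section LTS

variable {Act T : Type} {R : T → Act → T → Prop}

@[simp]
lemma LTS_R (m : RMode) : (LTS R).R m = R := by
  cases m <;> rfl

lemma sat_LTS_mode_iff (φ : HML Act) (m m' : RMode) (s : T) :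
    Sat (LTS R) φ m s ↔ Sat (LTS R) φ m' s := by
  induction φ generalizing m m' s with
  | tt => exact Iff.rfl
  | neg φ ih => exact not_congr (ih _ _ s)
  | dia α φ ih => simp only [Sat, LTS_R, ih m m']
  | and φ ψ ihφ ihψ => exact and_congr (ihφ m m' s) (ihψ m m' s)

lemma sat_LTS_neg (φ : HML Act) (s : T) :
    Sat (LTS R) (.neg φ) .a s ↔ ¬ Sat (LTS R) φ .a s :=
  not_congr (sat_LTS_mode_iff φ _ _ s)

lemma sat_LTS_box (α : Act) (φ : HML Act) (s : T) :
    Sat (LTS R) (HML.box α φ) .a s ↔ ∀ s', R s α s' → Sat (LTS R) φ .a s' := by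
  simp only [HML.box, Sat, LTS_R, RMode.negm, not_exists, not_and, not_not]

end LTS

namespace HML

variable {Act : Type}

def Satisfiable (Γ : Set (HML Act)) : Prop :=
  ∃ (T : Type) (R : T → Act → T → Prop) (l : T), ∀ γ ∈ Γ, Sat (LTS R) γ .a l

def FinitelySatisfiable (Γ : Set (HML Act)) : Prop :=
  ∀ Δ : Finset (HML Act), ↑Δ ⊆ Γ → Satisfiable (Δ : Set (HML Act))

lemma isOfFiniteCharacter_finitelySatisfiable :
    Order.IsOfFiniteCharacter {Γ : Set (HML Act) | FinitelySatisfiable Γ} := by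
  intro Γ
  refine ⟨fun hΓ Γ₀ hΓ₀ _ Δ hΔ => hΓ Δ (hΔ.trans hΓ₀), fun hΓ Δ hΔ => ?_⟩
  exact hΓ Δ hΔ Δ.finite_toSet Δ subset_rfl

lemma FinitelySatisfiable.insert_or_insert_neg {Γ : Set (HML Act)} (hΓ : FinitelySatisfiable Γ)
    (φ : HML Act) :
    FinitelySatisfiable (insert φ Γ) ∨ FinitelySatisfiable (insert (.neg φ) Γ) := by
  classical
  by_contra! ⟨h₁, h₂⟩
  unfold FinitelySatisfiable at h₁ h₂
  push Not at h₁ h₂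
  obtain ⟨Δ₁, hΔ₁, hΔ₁unsat⟩ := h₁
  obtain ⟨Δ₂, hΔ₂, hΔ₂unsat⟩ := h₂
  have hsub : ↑(Δ₁.erase φ ∪ Δ₂.erase (.neg φ)) ⊆ Γ := by
    simp only [Finset.coe_union, Finset.coe_erase, Set.union_subset_iff,
      Set.sdiff_singleton_subset_iff]
    exact ⟨hΔ₁, hΔ₂⟩
  obtain ⟨T, R, l, hl⟩ := hΓ _ hsub
  by_cases hφ : Sat (LTS R) φ .a l
  · refine hΔ₁unsat ⟨T, R, l, fun δ hδ => ?_⟩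
    obtain rfl | hne := eq_or_ne δ φ
    · exact hφ
    · exact hl δ (by simp [hne, hδ])
  · refine hΔ₂unsat ⟨T, R, l, fun δ hδ => ?_⟩
    obtain rfl | hne := eq_or_ne δ (.neg φ)
    · exact (sat_LTS_neg φ l).2 hφ
    · exact hl δ (by simp [hne, hδ])

abbrev MaximalFinitelySatisfiable (M : Set (HML Act)) : Prop :=
  Maximal FinitelySatisfiable M

namespace MaximalFinitelySatisfiable

variable {M : Set (HML Act)}

lemma mem_of_forall_sat (hM : MaximalFinitelySatisfiable M) {φ : HML Act}
    (Δ : Finset (HML Act)) (hΔ : ↑Δ ⊆ M)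
    (hφ : ∀ (T : Type) (R : T → Act → T → Prop) (l : T),
      (∀ δ ∈ Δ, Sat (LTS R) δ .a l) → Sat (LTS R) φ .a l) : φ ∈ M := by
  classical
  refine (hM.1.insert_or_insert_neg φ).elim hM.mem_of_prop_insert fun hneg => ?_
  obtain ⟨T, R, l, hl⟩ :=
    hneg (insert (.neg φ) Δ) (by simpa using Set.insert_subset_insert hΔ)
  have hlΔ : ∀ δ ∈ Δ, Sat (LTS R) δ .a l := fun δ hδ => hl δ (by simp [hδ])
  exact absurd (hφ T R l hlΔ) ((sat_LTS_neg φ l).1 (hl _ (by simp)))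

lemma neg_mem_iff (hM : MaximalFinitelySatisfiable M) (φ : HML Act) :
    HML.neg φ ∈ M ↔ φ ∉ M := by
  classical
  refine ⟨fun hneg hφ => ?_, fun hφ => ?_⟩
  · obtain ⟨T, R, l, hl⟩ := hM.1 {φ, .neg φ} (by simp [Set.insert_subset_iff, hφ, hneg])
    exact (sat_LTS_neg φ l).1 (hl _ (by simp)) (hl _ (by simp))
  · exact hM.mem_of_prop_insert
      ((hM.1.insert_or_insert_neg φ).resolve_left (hφ ∘ hM.mem_of_prop_insert))

lemma tt_mem (hM : MaximalFinitelySatisfiable M) : HML.tt ∈ M :=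
  hM.mem_of_forall_sat ∅ (by simp) fun _ _ _ _ => trivial

lemma and_mem_iff (hM : MaximalFinitelySatisfiable M) (φ ψ : HML Act) :
    HML.and φ ψ ∈ M ↔ φ ∈ M ∧ ψ ∈ M := by
  classical
  refine ⟨fun h => ⟨?_, ?_⟩, fun ⟨hφ, hψ⟩ => ?_⟩
  · exact hM.mem_of_forall_sat {HML.and φ ψ} (by simpa using h)
      fun _ _ _ hl => (hl (.and φ ψ) (by simp)).1
  · exact hM.mem_of_forall_sat {HML.and φ ψ} (by simpa using h)
      fun _ _ _ hl => (hl (.and φ ψ) (by simp)).2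
  · exact hM.mem_of_forall_sat {φ, ψ} (by simp [Set.insert_subset_iff, hφ, hψ])
      fun _ _ _ hl => ⟨hl _ (by simp), hl _ (by simp)⟩

lemma box_neg_mem_of_dia_notMem (hM : MaximalFinitelySatisfiable M) {α : Act} {φ : HML Act}
    (h : HML.dia α φ ∉ M) : box α (.neg φ) ∈ M := by
  refine hM.mem_of_forall_sat {.neg (.dia α φ)} (by simpa [hM.neg_mem_iff] using h)
    fun T R l hl => ?_
  have hnd := (sat_LTS_neg _ l).1 (hl _ (Finset.mem_singleton_self _))
  exact (sat_LTS_box α _ l).2 fun l' hl' => (sat_LTS_neg φ l').2 fun hφ => hnd ⟨l', hl', hφ⟩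

end MaximalFinitelySatisfiable

abbrev CanonicalState (Act : Type) : Type :=
  {M : Set (HML Act) // MaximalFinitelySatisfiable M}

def canonicalRel (M : CanonicalState Act) (α : Act) (N : CanonicalState Act) : Prop :=
  ∀ ψ, box α ψ ∈ M.1 → ψ ∈ N.1

lemma finitelySatisfiable_insert_boxSuccessors {M : CanonicalState Act} {α : Act}
    {φ : HML Act} (h : HML.dia α φ ∈ M.1) :
    FinitelySatisfiable (insert φ {ψ | box α ψ ∈ M.1}) := by
  classical
  intro Δ hΔ
  obtain ⟨T, R, l, hl⟩ := M.2.1 (insert (.dia α φ) ((Δ.erase φ).image (box α))) <| by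
    simp only [Finset.coe_insert, Finset.coe_image, Finset.coe_erase, Set.insert_subset_iff,
      Set.image_subset_iff]
    exact ⟨h, fun ψ hψ => (hΔ hψ.1).resolve_left hψ.2⟩
  obtain ⟨l', hll', hφ⟩ := hl _ (Finset.mem_insert_self _ _)
  refine ⟨T, R, l', fun δ hδ => ?_⟩
  obtain rfl | hne := eq_or_ne δ φ
  · exact hφ
  · have hbox : box α δ ∈ insert (.dia α φ) ((Δ.erase φ).image (box α)) :=
      Finset.mem_insert_of_mem (Finset.mem_image_of_mem _ (Finset.mem_erase.2 ⟨hne, hδ⟩))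
    exact (sat_LTS_box α δ l).1 (hl _ hbox) l' hll'

lemma exists_canonicalRel_of_dia_mem {M : CanonicalState Act} {α : Act} {φ : HML Act}
    (h : HML.dia α φ ∈ M.1) : ∃ N, canonicalRel M α N ∧ φ ∈ N.1 := by
  obtain ⟨N, hsub, hN⟩ := isOfFiniteCharacter_finitelySatisfiable.exists_maximal
    (finitelySatisfiable_insert_boxSuccessors h)
  exact ⟨⟨N, hN⟩, fun ψ hψ => hsub (Or.inr hψ), hsub (Or.inl rfl)⟩

lemma sat_canonical_iff (φ : HML Act) (M : CanonicalState Act) :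
    Sat (LTS canonicalRel) φ .a M ↔ φ ∈ M.1 := by
  induction φ generalizing M with
  | tt => exact iff_of_true trivial M.2.tt_mem
  | neg φ ih => rw [sat_LTS_neg, ih, M.2.neg_mem_iff]
  | dia α φ ih =>
    refine ⟨fun ⟨N, hMN, hφ⟩ => ?_, fun h => ?_⟩
    · by_contra hdia
      exact (N.2.neg_mem_iff φ).1 (hMN _ (M.2.box_neg_mem_of_dia_notMem hdia)) ((ih N).1 hφ)
    · obtain ⟨N, hMN, hφ⟩ := exists_canonicalRel_of_dia_mem h
      exact ⟨N, hMN, (ih N).2 hφ⟩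
  | and φ ψ ihφ ihψ => exact (and_congr (ihφ M) (ihψ M)).trans (M.2.and_mem_iff φ ψ).symm

end HML

theorem compactness_HML_general {Act : Type} (Γ : Set (HML Act))
    (h : ∀ Δ : Finset (HML Act), ↑Δ ⊆ Γ →
      ∃ (T : Type) (R : T → Act → T → Prop) (l : T), ∀ δ ∈ Δ, Sat (LTS R) δ .a l) :
    ∃ (T : Type) (R : T → Act → T → Prop) (l : T), ∀ γ ∈ Γ, Sat (LTS R) γ .a l := by
  obtain ⟨M, hΓM, hM⟩ :=
    HML.isOfFiniteCharacter_finitelySatisfiable.exists_maximal (x := Γ) h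
  exact ⟨HML.CanonicalState Act, HML.canonicalRel, ⟨M, hM⟩,
    fun γ hγ => (HML.sat_canonical_iff γ _).2 (hΓM hγ)⟩

/-- Compactness for Hennessy–Milner logic: if every finite subset of
`Γ` is satisfiable by a pointed labelled transition system, then so is `Γ`. -/
theorem compactness_HML {Act : Type} [Fintype Act] (Γ : Set (HML Act))
    (h : ∀ Δ : Finset (HML Act), ↑Δ ⊆ Γ →
      ∃ (T : Type) (R : T → Act → T → Prop) (l : T), ∀ δ ∈ Δ, Sat (LTS R) δ .a l) :
    ∃ (T : Type) (R : T → Act → T → Prop) (l : T), ∀ γ ∈ Γ, Sat (LTS R) γ .a l :=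
  compactness_HML_general Γ h
end
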